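/- arXiv:1506.03508 — 2 statements merged into one kernel-verified Lean document; each statement's English description precedes it below -/
import Mathlib

section
/- (MacMahon.) Let p₁,…,p_m be positive integers with p = p₁+⋯+p_m. Then (∏_{j=1}^{m} (q)_{p_j}) · ∑_w q^{maj(w)} = (q)_p in ℤ[q], where the sum is over all multiset permutations w of {1^{p₁},…,m^{p_m}}; that is, the generating function of multiset permutations by major index is the q-multinomial coefficient (q)_p / ((q)_{p₁} ⋯ (q)_{p_m}). -/
open scoped Classical

/-- The descent set of the word `w 1, …, w p` (1-based positions). -/
def desSet (p : ℕ) (f : Fin p → ℕ) : Finset ℕ :=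
  (Finset.Ico 1 p).filter fun i =>
    ∃ (h1 : i - 1 < p) (h2 : i < p), f ⟨i, h2⟩ < f ⟨i - 1, h1⟩

/-- `(q)_n = (1-q)(1-q²)⋯(1-qⁿ)`. -/
noncomputable def qpoch (n : ℕ) : Polynomial ℤ :=
  ∏ i ∈ Finset.Icc 1 n, (1 - Polynomial.X ^ i)

/-!
Divide by `(q)_p`. Since `1 / (q)_n` counts partitions with at most `n` parts,
`q ^ maj w / (q)_p` counts the sequences `h` that are antitone and strictly decrease at every
descent of `w` (subtract the staircase `i ↦ #{descents after i}`). Such a pair `(w, h)` is the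
same as the sequence of pairs `(h i, w i)` sorted by `h` decreasing and then by `w` increasing,
i.e. a multiset of pairs; splitting it by the letter gives `m` independent partitions with at
most `p_j` parts. Hence `∑_w q ^ maj w / (q)_p = ∏_j 1 / (q)_{p_j}`.
-/

open Finset PowerSeries OrderDual

section WeightGenFun

variable {α β : Type*}

/-- `∑ₐ X ^ wt a`; junk when a fibre of `wt` is infinite. -/
noncomputable def weightGenFun (wt : α → ℕ) : PowerSeries ℤ :=
  PowerSeries.mk fun N => Nat.card {a // wt a = N}

@[simp]
lemma coeff_weightGenFun (wt : α → ℕ) (N : ℕ) :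
    coeff N (weightGenFun wt) = Nat.card {a // wt a = N} :=
  coeff_mk _ _

lemma weightGenFun_congr {u : α → ℕ} {v : β → ℕ} (e : α ≃ β) (h : ∀ a, v (e a) = u a) :
    weightGenFun u = weightGenFun v := by
  ext N
  simp only [coeff_weightGenFun]
  rw [Nat.card_congr (e.subtypeEquiv (p := (u · = N)) (q := (v · = N)) fun a => by rw [h])]

lemma weightGenFun_unique [Unique α] (wt : α → ℕ) : weightGenFun wt = X ^ wt default := by
  ext N
  rw [coeff_weightGenFun, coeff_X_pow]
  split_ifs with h
  · have : Unique {a // wt a = N} :=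
      ⟨⟨default, h.symm⟩, fun a => Subtype.ext (Unique.eq_default _)⟩
    simp
  · have : IsEmpty {a // wt a = N} := ⟨fun a => h (by rw [← a.2, Unique.eq_default a.1])⟩
    simp

lemma weightGenFun_const_add (k : ℕ) (wt : α → ℕ) :
    weightGenFun (fun a => k + wt a) = X ^ k * weightGenFun wt := by
  ext N
  rw [coeff_X_pow_mul', coeff_weightGenFun]
  split_ifs with h
  · rw [coeff_weightGenFun, Nat.card_congr (Equiv.subtypeEquivRight
      (p := (k + wt · = N)) (q := (wt · = N - k)) fun a => by omega)]
  · have : IsEmpty {a // k + wt a = N} := ⟨fun a => h (by have := a.2; omega)⟩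
    simp

lemma finite_fibre_const_add {u : α → ℕ} (hu : ∀ N, Finite {a // u a = N}) (k N : ℕ) :
    Finite {a // k + u a = N} :=
  have := hu (N - k)
  Finite.of_injective (fun a => (⟨a.1, Nat.eq_sub_of_add_eq' a.2⟩ : {a // u a = N - k}))
    fun _ _ h => Subtype.ext (Subtype.mk.inj h)

lemma weightGenFun_sumElim {u : α → ℕ} {v : β → ℕ} (hu : ∀ N, Finite {a // u a = N})
    (hv : ∀ N, Finite {b // v b = N}) :
    weightGenFun (Sum.elim u v) = weightGenFun u + weightGenFun v := by
  ext N
  simp [Nat.card_congr Equiv.subtypeSum, Nat.card_sum]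

lemma weightGenFun_sigma {ι : Type*} [Fintype ι] {β : ι → Type*} (u : ∀ i, β i → ℕ)
    (hu : ∀ i N, Finite {b // u i b = N}) :
    weightGenFun (fun x : Σ i, β i => u x.1 x.2) = ∑ i, weightGenFun (u i) := by
  ext N
  let e : {x : Σ i, β i // u x.1 x.2 = N} ≃ Σ i, {b // u i b = N} :=
    { toFun x := ⟨x.1.1, x.1.2, x.2⟩
      invFun y := ⟨⟨y.1, y.2.1⟩, y.2.2⟩
      left_inv _ := rfl
      right_inv _ := rfl }
  simp [map_sum, Nat.card_congr e, Nat.card_sigma]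

lemma weightGenFun_prod {u : α → ℕ} {v : β → ℕ} (hu : ∀ N, Finite {a // u a = N})
    (hv : ∀ N, Finite {b // v b = N}) :
    weightGenFun (fun x : α × β => u x.1 + v x.2) = weightGenFun u * weightGenFun v := by
  ext N
  let e : {x : α × β // u x.1 + v x.2 = N} ≃
      Σ q : antidiagonal N, {a // u a = q.1.1} × {b // v b = q.1.2} :=
    { toFun x := ⟨⟨(u x.1.1, v x.1.2), mem_antidiagonal.2 x.2⟩, ⟨x.1.1, rfl⟩, ⟨x.1.2, rfl⟩⟩
      invFun y := ⟨(y.2.1.1, y.2.2.1), by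
        rw [y.2.1.2, y.2.2.2]; exact mem_antidiagonal.1 y.1.2⟩
      left_inv _ := rfl
      right_inv := by
        rintro ⟨⟨⟨k, l⟩, hkl⟩, ⟨a, ha⟩, ⟨b, hb⟩⟩
        dsimp only at ha hb
        subst ha hb
        rfl }
  rw [coeff_mul, coeff_weightGenFun, Nat.card_congr e, Nat.card_sigma,
    ← sum_coe_sort (antidiagonal N)]
  simp [Nat.card_prod]

lemma finite_fibre_pi {ι : Type*} [Fintype ι] {β : ι → Type*} (u : ∀ i, β i → ℕ)
    (hu : ∀ i N, Finite {b // u i b = N}) (N : ℕ) :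
    Finite {x : ∀ i, β i // ∑ i, u i (x i) = N} :=
  Finite.of_injective
    (fun x i => (⟨⟨u i (x.1 i), Nat.lt_succ_of_le <|
        (single_le_sum (f := fun i => u i (x.1 i)) (by simp) (mem_univ i)).trans_eq x.2⟩,
      ⟨x.1 i, rfl⟩⟩ : Σ k : Fin (N + 1), {b // u i b = k}))
    fun x y h => Subtype.ext <| funext fun i => congrArg (fun s => s.2.1) (congrFun h i)

lemma weightGenFun_pi {m : ℕ} (β : Fin m → Type*) (u : ∀ j, β j → ℕ)
    (hu : ∀ j N, Finite {b // u j b = N}) :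
    weightGenFun (fun x : ∀ j, β j => ∑ j, u j (x j)) = ∏ j, weightGenFun (u j) := by
  induction m with
  | zero => simp [weightGenFun_unique]
  | succ m ih =>
    rw [Fin.prod_univ_succ, ← ih _ _ fun j => hu j.succ,
      ← weightGenFun_prod (hu 0) (finite_fibre_pi _ fun j => hu j.succ)]
    exact (weightGenFun_congr (Fin.consEquiv β) fun x => by simp [Fin.sum_univ_succ]).symm

lemma finite_fibre_sum {ι : Type*} [Fintype ι] (P : (ι → ℕ) → Prop) (N : ℕ) :
    Finite {a : {a : ι → ℕ // P a} // ∑ i, a.1 i = N} :=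
  Finite.of_injective
    (fun a i => (⟨a.1.1 i, Nat.lt_succ_of_le <|
      (single_le_sum (f := a.1.1) (by simp) (mem_univ i)).trans_eq a.2⟩ :
      Fin (N + 1)))
    fun a b h => Subtype.ext <| Subtype.ext <| funext fun i => congrArg Fin.val (congrFun h i)

end WeightGenFun

section Partitions

noncomputable def partitionGenFun (n : ℕ) : PowerSeries ℤ :=
  weightGenFun fun a : {a : Fin n → ℕ // Antitone a} => ∑ i, a.1 i

lemma antitone_snoc_zero {n : ℕ} {b : Fin n → ℕ} (hb : Antitone b) :
    Antitone (Fin.snoc b 0 : Fin (n + 1) → ℕ) := by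
  intro i j hij
  induction j using Fin.lastCases with
  | last => simp
  | cast j =>
    induction i using Fin.lastCases with
    | last => exact absurd hij (not_le.2 (Fin.castSucc_lt_last j))
    | cast i => simpa using hb (Fin.castSucc_le_castSucc_iff.1 hij)

/-- A partition with at most `n + 1` parts either has fewer than `n + 1` parts, or all its
`n + 1` parts can be decreased by one. -/
def antitoneSuccEquiv (n : ℕ) :
    {b : Fin n → ℕ // Antitone b} ⊕ {a : Fin (n + 1) → ℕ // Antitone a} ≃
      {a : Fin (n + 1) → ℕ // Antitone a} where
  toFun := Sum.elim (fun b => ⟨Fin.snoc b.1 0, antitone_snoc_zero b.2⟩)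
    (fun a => ⟨fun i => a.1 i + 1, fun _ _ hij => Nat.add_le_add_right (a.2 hij) 1⟩)
  invFun a :=
    if a.1 (Fin.last n) = 0 then
      .inl ⟨Fin.init a.1, a.2.comp_monotone Fin.strictMono_castSucc.monotone⟩
    else .inr ⟨fun i => a.1 i - 1, fun _ _ hij => Nat.sub_le_sub_right (a.2 hij) 1⟩
  left_inv := by rintro (b | a) <;> simp
  right_inv a := by
    by_cases h : a.1 (Fin.last n) = 0
    · simp only [h, ↓reduceIte, Sum.elim_inl]
      exact Subtype.ext (show Fin.snoc (Fin.init a.1) 0 = a.1 by rw [← h, Fin.snoc_init_self])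
    · simp only [h, ↓reduceIte, Sum.elim_inr]
      refine Subtype.ext (funext fun i => ?_)
      have := (Nat.pos_of_ne_zero h).trans_le (a.2 (Fin.le_last i))
      dsimp only
      omega

lemma partitionGenFun_succ (n : ℕ) :
    partitionGenFun (n + 1) = partitionGenFun n + X ^ (n + 1) * partitionGenFun (n + 1) := by
  rw [partitionGenFun, partitionGenFun, ← weightGenFun_const_add,
    ← weightGenFun_sumElim (finite_fibre_sum _) (finite_fibre_const_add (finite_fibre_sum _) _)]
  refine (weightGenFun_congr (antitoneSuccEquiv n) ?_).symm
  rintro (b | a)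
  · simp [antitoneSuccEquiv, Fin.sum_univ_castSucc]
  · simp [antitoneSuccEquiv, sum_add_distrib, add_comm]

lemma qpoch_mul_partitionGenFun (n : ℕ) : (qpoch n : PowerSeries ℤ) * partitionGenFun n = 1 := by
  induction n with
  | zero =>
    have : Unique {a : Fin 0 → ℕ // Antitone a} :=
      { default := ⟨0, antitone_const⟩, uniq := fun _ => Subsingleton.elim _ _ }
    rw [partitionGenFun, weightGenFun_unique]
    simp [qpoch]
  | succ n ih =>
    have hq : (qpoch (n + 1) : PowerSeries ℤ) = qpoch n * (1 - X ^ (n + 1) : PowerSeries ℤ) := by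
      simp [qpoch, prod_Icc_succ_top]
    rw [hq]
    linear_combination ih + (qpoch n : PowerSeries ℤ) * partitionGenFun_succ n

end Partitions

section Compatible

variable {p : ℕ}

/-- Equivalently (`isCompatible_iff_covBy`): `h` is antitone and strictly decreases at every
descent of `w`. -/
def IsCompatible {α : Type*} [LinearOrder α] (w : Fin p → α) (h : Fin p → ℕ) : Prop :=
  Monotone fun i => toLex (toDual (h i), w i)

lemma isCompatible_iff_covBy {α : Type*} [LinearOrder α] {w : Fin p → α} {h : Fin p → ℕ} :
    IsCompatible w h ↔ ∀ i j, i ⋖ j → h j + (if w j < w i then 1 else 0) ≤ h i := by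
  rw [IsCompatible, monotone_iff_forall_covBy]
  refine forall₂_congr fun i j => imp_congr_right fun _ => ?_
  rw [Prod.Lex.toLex_le_toLex, toDual_lt_toDual, toDual_inj]
  split_ifs with hw
  · simp [hw.not_ge]
  · simp only [not_lt.1 hw, and_true, add_zero]
    omega

lemma isCompatible_comp_strictMono {α β : Type*} [LinearOrder α] [LinearOrder β] {φ : α → β}
    (hφ : StrictMono φ) {w : Fin p → α} {h : Fin p → ℕ} :
    IsCompatible (φ ∘ w) h ↔ IsCompatible w h := by
  simp only [isCompatible_iff_covBy, Function.comp, hφ.lt_iff_lt]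

lemma mem_desSet_iff_of_covBy {f : Fin p → ℕ} {i j : Fin p} (hij : i ⋖ j) :
    (j : ℕ) ∈ desSet p f ↔ f j < f i := by
  obtain ⟨_, hj⟩ := j
  obtain rfl : _ = (i : ℕ) + 1 := (Nat.covBy_iff_add_one_eq.1 (Fin.covBy_iff.1 hij)).symm
  simp [desSet, hj]

def numDescentsAfter (f : Fin p → ℕ) (i : Fin p) : ℕ := #{d ∈ desSet p f | (i : ℕ) < d}

lemma sum_numDescentsAfter (f : Fin p → ℕ) :
    ∑ i, numDescentsAfter f i = (desSet p f).sum id := by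
  simp only [numDescentsAfter, card_filter]
  rw [sum_comm]
  refine sum_congr rfl fun d hd => ?_
  rw [← card_filter, Fin.card_filter_val_lt]
  have := (mem_Ico.1 (filter_subset _ _ hd)).2
  simp only [id_eq, inf_eq_right, ge_iff_le]
  omega

lemma numDescentsAfter_of_covBy (f : Fin p → ℕ) {i j : Fin p} (hij : i ⋖ j) :
    numDescentsAfter f i = numDescentsAfter f j + if f j < f i then 1 else 0 := by
  have hj : (j : ℕ) = i + 1 := (Nat.covBy_iff_add_one_eq.1 (Fin.covBy_iff.1 hij)).symm
  rw [numDescentsAfter, numDescentsAfter,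
    filter_congr (q := fun d => (j : ℕ) < d ∨ d = j) fun d _ => by omega, filter_or,
    card_union_of_disjoint (disjoint_filter.2 fun _ _ h => by omega), filter_eq']
  by_cases hd : f j < f i <;> simp [mem_desSet_iff_of_covBy hij, hd]

lemma numDescentsAfter_le {f h : Fin p → ℕ} (hc : IsCompatible f h) (i : Fin p) :
    numDescentsAfter f i ≤ h i := by
  -- `h - numDescentsAfter f` is antitone, and `numDescentsAfter f` vanishes at the last position.
  have hanti : Antitone fun i => (h i : ℤ) - numDescentsAfter f i := by
    refine (antitone_iff_forall_covBy _).2 fun i j hij => ?_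
    have := isCompatible_iff_covBy.1 hc i j hij
    have := numDescentsAfter_of_covBy f hij
    split_ifs at * <;> omega
  obtain ⟨n, rfl⟩ : ∃ n, p = n + 1 := ⟨p - 1, by have := i.2; omega⟩
  have hlast : numDescentsAfter f (Fin.last n) = 0 :=
    card_eq_zero.2 <| filter_eq_empty_iff.2 fun d hd => by
      have := (mem_Ico.1 (filter_subset _ _ hd)).2
      simp only [Fin.val_last, not_lt, ge_iff_le]
      omega
  have := hanti (Fin.le_last i)
  dsimp only at this
  omega

def antitoneEquivCompatible (f : Fin p → ℕ) :
    {a : Fin p → ℕ // Antitone a} ≃ {h // IsCompatible f h} where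
  toFun a := ⟨a.1 + numDescentsAfter f, isCompatible_iff_covBy.2 fun i j hij => by
    have := numDescentsAfter_of_covBy f hij
    have := a.2 hij.le
    simp only [Pi.add_apply]
    omega⟩
  invFun h := ⟨h.1 - numDescentsAfter f, (antitone_iff_forall_covBy _).2 fun i j hij => by
    have := numDescentsAfter_of_covBy f hij
    have := isCompatible_iff_covBy.1 h.2 i j hij
    have := numDescentsAfter_le h.2 j
    simp only [Pi.sub_apply]
    omega⟩
  left_inv a := Subtype.ext (funext fun i => Nat.add_sub_cancel ..)
  right_inv h := Subtype.ext (funext fun i => Nat.sub_add_cancel (numDescentsAfter_le h.2 i))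

lemma weightGenFun_compatible (f : Fin p → ℕ) :
    weightGenFun (fun h : {h // IsCompatible f h} => ∑ i, h.1 i) =
      X ^ (desSet p f).sum id * partitionGenFun p := by
  rw [partitionGenFun, ← weightGenFun_const_add]
  refine (weightGenFun_congr (antitoneEquivCompatible f) fun a => ?_).symm
  simp [antitoneEquivCompatible, sum_add_distrib, sum_numDescentsAfter, add_comm]

end Compatible

section Sorting

variable {α : Type*} [LinearOrder α]

@[simps apply_coe]
def monotoneEquivSym (n : ℕ) : {f : Fin n → α // Monotone f} ≃ Sym α n where
  toFun f := ⟨univ.val.map f.1, by simp⟩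
  invFun s := ⟨fun i => (s.1.sort (· ≤ ·))[i.1]'(by simp),
    monotone_iff_forall_lt.2 fun i j hij =>
      List.pairwise_iff_getElem.1 (s.1.pairwise_sort (· ≤ ·)) _ _ _ _ hij⟩
  left_inv f := by
    have : (univ.val.map f.1).sort (· ≤ ·) = List.ofFn f.1 := by
      rw [Fin.univ_val_map, Multiset.coe_sort]
      exact List.mergeSort_eq_self _ <| List.pairwise_ofFn.2 fun i j hij => by
        simpa using f.2 hij.le
    ext i
    exact (List.getElem_of_eq this _).trans (by simp)
  right_inv s := Subtype.ext <| by
    dsimp only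
    rw [Fin.univ_val_map]
    refine (congrArg ((↑) : List α → Multiset α) ?_).trans (Multiset.sort_eq s.1 (· ≤ ·))
    exact List.ext_getElem (by simp) fun _ _ _ => List.getElem_ofFn ..

lemma Multiset.card_filter_map_univ {β γ : Type*} [Fintype β] (g : β → γ) (P : γ → Prop)
    [DecidablePred P] : Multiset.card ((univ.val.map g).filter P) = #{i | P (g i)} := by
  rw [Multiset.filter_map, Multiset.card_map]
  rfl

end Sorting

section Fibres

variable {α ι : Type*} [DecidableEq ι]

lemma Multiset.count_map_prodMk_right (s : Multiset α) (i : ι) (x : α × ι) :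
    count x (s.map (·, i)) = if x.2 = i then count x.1 s else 0 := by
  obtain ⟨a, j⟩ := x
  split_ifs with h
  · subst h
    exact count_map_eq_count' _ _ (fun _ _ h => (Prod.mk.inj h).1) a
  · exact count_eq_zero.2 (by simp [Ne.symm h])

lemma Multiset.sum_filter_snd [Fintype ι] (s : Multiset (α × ι)) :
    ∑ j, s.filter (·.2 = j) = s := by
  ext x
  simp [count_sum', count_filter]

lemma Multiset.filter_snd_sum_map_prodMk [Fintype ι] (F : ι → Multiset α) (j : ι) :
    (∑ i, (F i).map (·, i)).filter (·.2 = j) = (F j).map (·, j) := by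
  ext x
  by_cases h : x.2 = j <;> simp [count_sum', count_map_prodMk_right, h]

def multisetFibresEquiv [Fintype ι] (c : ι → ℕ) :
    {s : Multiset (α × ι) // ∀ j, Multiset.card (s.filter (·.2 = j)) = c j} ≃
      ∀ j, Sym α (c j) where
  toFun s j := ⟨(s.1.filter (·.2 = j)).map Prod.fst, by rw [Multiset.card_map, s.2 j]⟩
  invFun F := ⟨∑ j, (F j).1.map (·, j), fun j => by
    rw [Multiset.filter_snd_sum_map_prodMk, Multiset.card_map, (F j).2]⟩
  left_inv s := by
    refine Subtype.ext ?_
    conv_rhs => rw [← Multiset.sum_filter_snd s.1]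
    refine sum_congr rfl fun j _ => ?_
    rw [Multiset.map_map]
    conv_rhs => rw [← Multiset.map_id (s.1.filter (·.2 = j))]
    refine Multiset.map_congr rfl fun x hx => Prod.ext rfl ?_
    exact (Multiset.of_mem_filter hx).symm
  right_inv F := by
    ext j : 1
    refine Subtype.ext ?_
    simp [Multiset.filter_snd_sum_map_prodMk]

lemma sum_map_multisetFibresEquiv_symm [Fintype ι] (c : ι → ℕ) (φ : α → ℕ)
    (F : ∀ j, Sym α (c j)) :
    (((multisetFibresEquiv c).symm F).1.map (φ ∘ Prod.fst)).sum = ∑ j, ((F j).1.map φ).sum := by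
  change ((∑ j, (F j).1.map (·, j)).map _).sum = _
  rw [← Multiset.coe_mapAddMonoidHom, map_sum, Multiset.sum_sum]
  simp [Multiset.map_map, Function.comp_def]

end Fibres

section Words

variable {m p : ℕ}

def wordsWithContent (par : Fin m → ℕ) (p : ℕ) : Finset (Fin p → Fin m) :=
  univ.filter fun w => ∀ j, #{i | w i = j} = par j

def compatiblePairEquiv (par : Fin m → ℕ) :
    (Σ w : wordsWithContent par p, {h : Fin p → ℕ // IsCompatible (fun k => (w.1 k : ℕ)) h}) ≃
      {g : {g : Fin p → ℕᵒᵈ ×ₗ Fin m // Monotone g} //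
        ∀ j, #{i | (ofLex (g.1 i)).2 = j} = par j} where
  toFun x := ⟨⟨fun i => toLex (toDual (x.2.1 i), x.1.1 i),
    (isCompatible_comp_strictMono Fin.val_strictMono).1 x.2.2⟩, (mem_filter.1 x.1.2).2⟩
  invFun g := ⟨⟨fun i => (ofLex (g.1.1 i)).2, mem_filter.2 ⟨mem_univ _, g.2⟩⟩,
    fun i => ofDual (ofLex (g.1.1 i)).1,
    (isCompatible_comp_strictMono Fin.val_strictMono).2 g.1.2⟩
  left_inv _ := Sigma.subtype_ext rfl rfl
  right_inv _ := rfl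

lemma weightGenFun_compatiblePairs (par : Fin m → ℕ) (hp : p = ∑ j, par j) :
    weightGenFun (fun x : Σ w : wordsWithContent par p,
      {h : Fin p → ℕ // IsCompatible (fun k => (w.1 k : ℕ)) h} => ∑ i, x.2.1 i) =
      ∏ j, partitionGenFun (par j) := by
  let wt : ℕᵒᵈ ×ₗ Fin m → ℕ := fun x => ofDual (ofLex x).1
  have hcard (s : Multiset (ℕᵒᵈ ×ₗ Fin m))
      (hs : ∀ j, Multiset.card (s.filter fun x => (ofLex x).2 = j) = par j) :
      Multiset.card s = p := by
    have := congrArg Multiset.card (Multiset.sum_filter_snd (α := ℕᵒᵈ) (ι := Fin m) s)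
    rw [Multiset.card_sum] at this
    rw [hp]
    exact this.symm.trans (sum_congr rfl fun j _ => hs j)
  calc _ = weightGenFun (fun g : {g : {g : Fin p → ℕᵒᵈ ×ₗ Fin m // Monotone g} //
          ∀ j, #{i | (ofLex (g.1 i)).2 = j} = par j} => ∑ i, wt (g.1.1 i)) :=
        weightGenFun_congr (compatiblePairEquiv par) fun _ => rfl
    _ = weightGenFun (fun s : {s : Sym (ℕᵒᵈ ×ₗ Fin m) p //
          ∀ j, Multiset.card (s.1.filter fun x => (ofLex x).2 = j) = par j} =>
          (s.1.1.map wt).sum) :=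
        weightGenFun_congr ((monotoneEquivSym p).subtypeEquiv fun g => forall_congr' fun j => by
          rw [monotoneEquivSym_apply_coe, Multiset.card_filter_map_univ]) fun g => by
          simp only [Equiv.subtypeEquiv_apply, monotoneEquivSym_apply_coe, Multiset.map_map]
          rfl
    _ = weightGenFun (fun s : {s : Multiset (ℕᵒᵈ ×ₗ Fin m) //
          ∀ j, Multiset.card (s.filter fun x => (ofLex x).2 = j) = par j} => (s.1.map wt).sum) :=
        weightGenFun_congr (Equiv.subtypeSubtypeEquivSubtype fun {s} hs => hcard s hs)
          fun _ => rfl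
    _ = weightGenFun (fun F : ∀ j, Sym ℕᵒᵈ (par j) => ∑ j, ((F j).1.map ofDual).sum) :=
        (weightGenFun_congr (multisetFibresEquiv par).symm
          (sum_map_multisetFibresEquiv_symm par ofDual)).symm
    _ = weightGenFun (fun F : ∀ j, {a : Fin (par j) → ℕ // Antitone a} => ∑ j, ∑ k, (F j).1 k) :=
        (weightGenFun_congr (Equiv.piCongrRight fun j => (monotoneEquivSym (α := ℕᵒᵈ) (par j) :
          {a : Fin (par j) → ℕ // Antitone a} ≃ Sym ℕᵒᵈ (par j))) fun F => by
          simp only [Equiv.piCongrRight_apply, Pi.map_apply, monotoneEquivSym_apply_coe,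
            Multiset.map_map]
          rfl).symm
    _ = ∏ j, partitionGenFun (par j) :=
        weightGenFun_pi (fun j => {a : Fin (par j) → ℕ // Antitone a}) (fun _ a => ∑ k, a.1 k)
          fun _ => finite_fibre_sum _

lemma sum_X_pow_maj_mul_partitionGenFun (par : Fin m → ℕ) (hp : p = ∑ j, par j) :
    ((∑ w ∈ wordsWithContent par p,
      Polynomial.X ^ ((desSet p fun k => (w k : ℕ)).sum id) : Polynomial ℤ) : PowerSeries ℤ) *
      partitionGenFun p = ∏ j, partitionGenFun (par j) := by
  rw [← weightGenFun_compatiblePairs par hp, weightGenFun_sigma _ fun w => finite_fibre_sum _,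
    ← Polynomial.coeToPowerSeries.ringHom_apply, map_sum, sum_mul, ← sum_coe_sort]
  refine sum_congr rfl fun w _ => ?_
  simp [weightGenFun_compatible]

end Words

lemma prod_qpoch_mul_eq_qpoch {ι : Type*} [Fintype ι] {c : ι → ℕ} {p : ℕ} {S : Polynomial ℤ}
    (h : (S : PowerSeries ℤ) * partitionGenFun p = ∏ j, partitionGenFun (c j)) :
    (∏ j, qpoch (c j)) * S = qpoch p := by
  rw [← Polynomial.coe_inj, Polynomial.coe_mul]
  have hprod : ((∏ j, qpoch (c j) : Polynomial ℤ) : PowerSeries ℤ) *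
      ∏ j, partitionGenFun (c j) = 1 := by
    rw [← Polynomial.coeToPowerSeries.ringHom_apply, map_prod, ← prod_mul_distrib]
    exact prod_eq_one fun j _ => qpoch_mul_partitionGenFun (c j)
  calc _ = (∏ j, qpoch (c j) : Polynomial ℤ) * (S : PowerSeries ℤ) *
        ((qpoch p : PowerSeries ℤ) * partitionGenFun p) := by
        rw [qpoch_mul_partitionGenFun, mul_one]
    _ = (qpoch p : PowerSeries ℤ) := by
      rw [mul_left_comm, mul_assoc, h, hprod, mul_one]

theorem macmahon_maj_multiset_general (m : ℕ) (par : Fin m → ℕ) (p : ℕ) (hp : p = ∑ j, par j) :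
    (∏ j, qpoch (par j)) *
      (∑ w ∈ Finset.univ.filter (fun w : Fin p → Fin m =>
          ∀ j : Fin m, (Finset.univ.filter fun i : Fin p => w i = j).card = par j),
        Polynomial.X ^ ((desSet p fun k => ((w k : ℕ))).sum id)) = qpoch p :=
  prod_qpoch_mul_eq_qpoch (sum_X_pow_maj_mul_partitionGenFun par hp)

/-- **MacMahon** : the generating function by major index of the multiset
permutations of `{1^{p₁},…,m^{p_m}}` is the `q`-multinomial coefficient:
`((q)_{p₁} ⋯ (q)_{p_m}) ⬝ ∑_w q^{maj w} = (q)_p` where `p = p₁ + ⋯ + p_m`. -/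
theorem macmahon_maj_multiset (m : ℕ) (hm : 0 < m) (par : Fin m → ℕ)
    (hpar : ∀ j, 0 < par j) (p : ℕ) (hp : p = ∑ j, par j) :
    (∏ j, qpoch (par j)) *
      (∑ w ∈ Finset.univ.filter (fun w : Fin p → Fin m =>
          ∀ j : Fin m, (Finset.univ.filter fun i : Fin p => w i = j).card = par j),
        Polynomial.X ^ ((desSet p fun k => ((w k : ℕ))).sum id)) = qpoch p :=
  macmahon_maj_multiset_general m par p hp
end

section
/- (Stembridge's fundamental theorem of enriched P-partitions.) Every enriched P-partition σ is an enriched π-partition for exactly one linear extension π ∈ L(P); moreover, for every π ∈ L(P), every enriched π-partition is an enriched P-partition. Hence the set of enriched P-partitions is the disjoint union over π ∈ L(P) of the sets of enriched π-partitions. -/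
/-!
Everything reduces to sorting by a key. Send `i` to `(-r, ±i)` in `ℤ ×ₗ ℤ`, where `r` is the
rank of `σ i` in the order `⊴` and the sign of the tie-breaker is that of `σ i`. When `σ` takes
no zero value this key is injective, and the enriched-partition condition on a pair "`i` before
`j`" says exactly that the key of `i` is smaller than that of `j`. Hence `σ` is an enriched
`π`-partition iff `π` lists `[p]` in increasing key order, which determines `π`; and when `σ` is
an enriched `P`-partition the key increases along `≺`, so this order is a linear extension.
Conversely, if `π` is a linear extension then `i ≺ j` puts `i` before `j` in `π`, and the
`π`-condition on that pair is the `P`-condition.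
-/

open scoped Classical

/-- The total order `⊴` on the nonzero integers:
`-1 ⊴ +1 ⊴ -2 ⊴ +2 ⊴ ⋯`, i.e. `a ⊴ b` iff `|a| < |b|`, or `|a| = |b|` and `a ≤ b`. -/
def enrLE (a b : ℤ) : Prop := a.natAbs < b.natAbs ∨ (a.natAbs = b.natAbs ∧ a ≤ b)

/-- `π` is a linear extension of `P`. -/
def IsLinExt (p : ℕ) (P : PartialOrder (Fin p)) (π : Equiv.Perm (Fin p)) : Prop :=
  ∀ i j : Fin p, P.lt (π i) (π j) → i < j

/-- An enriched `P`-partition: a map `σ : [p] → ℤ∖{0}` with, for all `i ≺ j`: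
`σ j ⊴ σ i`; if `σ i = σ j > 0` then `i < j`; if `σ i = σ j < 0` then `i > j`. -/
def IsEnrichedPPartition (p : ℕ) (P : PartialOrder (Fin p)) (σ : Fin p → ℤ) : Prop :=
  (∀ i, σ i ≠ 0) ∧
  ∀ i j : Fin p, P.lt i j →
    enrLE (σ j) (σ i) ∧ (σ i = σ j → 0 < σ i → i < j) ∧ (σ i = σ j → σ i < 0 → j < i)

/-- An enriched `π`-partition for the linear extension `π`: an enriched partition
for the total order `π 1 ≺' π 2 ≺' ⋯ ≺' π p` with the same labels. -/
def IsEnrichedPiPartition (p : ℕ) (π : Equiv.Perm (Fin p)) (σ : Fin p → ℤ) : Prop :=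
  (∀ i, σ i ≠ 0) ∧
  ∀ i k : Fin p, i < k →
    enrLE (σ (π k)) (σ (π i)) ∧
    (σ (π i) = σ (π k) → 0 < σ (π i) → π i < π k) ∧
    (σ (π i) = σ (π k) → σ (π i) < 0 → π k < π i)

theorem Tuple.existsUnique_perm_strictMono_comp {α : Type*} [LinearOrder α] {n : ℕ}
    {f : Fin n → α} (hf : Function.Injective f) :
    ∃! π : Equiv.Perm (Fin n), StrictMono (f ∘ π) :=
  ⟨Tuple.sort f,
    (Tuple.monotone_sort f).strictMono_of_injective (hf.comp (Tuple.sort f).injective),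
    fun _ hπ => Equiv.ext fun i =>
      hf (congrFun (Tuple.unique_monotone hπ.monotone (Tuple.monotone_sort f)) i)⟩

/-- The position of `a` in the order `⊴`: `-1 ↦ 2`, `1 ↦ 3`, `-2 ↦ 4`, `2 ↦ 5`, … -/
def enrRank (a : ℤ) : ℕ := 2 * a.natAbs + if 0 < a then 1 else 0

def EnrPrecedes {p : ℕ} (σ : Fin p → ℤ) (i j : Fin p) : Prop :=
  enrLE (σ j) (σ i) ∧ (σ i = σ j → 0 < σ i → i < j) ∧ (σ i = σ j → σ i < 0 → j < i)

def enrKey {p : ℕ} (σ : Fin p → ℤ) (i : Fin p) : ℤ ×ₗ ℤ :=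
  toLex (-(enrRank (σ i) : ℤ), if 0 < σ i then (i : ℤ) else -(i : ℤ))

section
variable {p : ℕ} {σ : Fin p → ℤ}

theorem enrKey_lt_iff {i j : Fin p} (hj : σ j ≠ 0) :
    enrKey σ i < enrKey σ j ↔ EnrPrecedes σ i j := by
  unfold enrKey EnrPrecedes enrLE enrRank
  rw [Prod.Lex.toLex_lt_toLex, Fin.lt_def, Fin.lt_def]
  split_ifs <;> omega

theorem enrKey_injective (hσ : ∀ i, σ i ≠ 0) : Function.Injective (enrKey σ) := by
  intro i j h
  have hi := hσ i
  have hj := hσ j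
  unfold enrKey enrRank at h
  simp only [toLex_inj, Prod.mk.injEq] at h
  ext
  split_ifs at h <;> omega

theorem isEnrichedPiPartition_iff_strictMono {π : Equiv.Perm (Fin p)} :
    IsEnrichedPiPartition p π σ ↔ (∀ i, σ i ≠ 0) ∧ StrictMono (enrKey σ ∘ π) :=
  and_congr_right fun hσ =>
    forall₂_congr fun _ k => imp_congr_right fun _ => (enrKey_lt_iff (hσ (π k))).symm

theorem IsEnrichedPPartition.existsUnique_isEnrichedPiPartition {P : PartialOrder (Fin p)}
    (hσ : IsEnrichedPPartition p P σ) :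
    ∃! π : Equiv.Perm (Fin p), IsLinExt p P π ∧ IsEnrichedPiPartition p π σ := by
  obtain ⟨hne, hP⟩ := hσ
  have key_lt_of_lt : ∀ i j, P.lt i j → enrKey σ i < enrKey σ j :=
    fun i j h => (enrKey_lt_iff (hne j)).2 (hP i j h)
  obtain ⟨π, hπ, huniq⟩ := Tuple.existsUnique_perm_strictMono_comp (enrKey_injective hne)
  refine ⟨π, ⟨fun i j h => hπ.lt_iff_lt.1 (key_lt_of_lt _ _ h), ?_⟩, fun π' hπ' => ?_⟩
  · exact isEnrichedPiPartition_iff_strictMono.2 ⟨hne, hπ⟩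
  · exact huniq π' (isEnrichedPiPartition_iff_strictMono.1 hπ'.2).2

theorem IsEnrichedPiPartition.isEnrichedPPartition {P : PartialOrder (Fin p)}
    {π : Equiv.Perm (Fin p)} (hπ : IsLinExt p P π) (hσ : IsEnrichedPiPartition p π σ) :
    IsEnrichedPPartition p P σ := by
  refine ⟨hσ.1, fun i j hij => ?_⟩
  simpa using hσ.2 (π.symm i) (π.symm j) (hπ _ _ (by simpa using hij))

end

theorem enriched_fundamental_theorem_general (p : ℕ) (P : PartialOrder (Fin p)) :
    (∀ σ : Fin p → ℤ, IsEnrichedPPartition p P σ →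
        ∃! π : Equiv.Perm (Fin p), IsLinExt p P π ∧ IsEnrichedPiPartition p π σ) ∧
    (∀ π : Equiv.Perm (Fin p), IsLinExt p P π →
        ∀ σ : Fin p → ℤ, IsEnrichedPiPartition p π σ → IsEnrichedPPartition p P σ) :=
  ⟨fun _ hσ => hσ.existsUnique_isEnrichedPiPartition,
    fun _ hπ _ hσ => hσ.isEnrichedPPartition hπ⟩

/-- **Stembridge's fundamental theorem of enriched `P`-partitions** : every enriched
`P`-partition is an enriched `π`-partition for exactly one linear extension
`π ∈ L(P)`, and every enriched `π`-partition for `π ∈ L(P)` is an enriched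
`P`-partition; so the enriched `P`-partitions are the disjoint union over `L(P)`
of the enriched `π`-partitions. -/
theorem enriched_fundamental_theorem (p : ℕ) (hp : 0 < p)
    (P : PartialOrder (Fin p)) :
    (∀ σ : Fin p → ℤ, IsEnrichedPPartition p P σ →
        ∃! π : Equiv.Perm (Fin p), IsLinExt p P π ∧ IsEnrichedPiPartition p π σ) ∧
    (∀ π : Equiv.Perm (Fin p), IsLinExt p P π →
        ∀ σ : Fin p → ℤ, IsEnrichedPiPartition p π σ → IsEnrichedPPartition p P σ) :=
  enriched_fundamental_theorem_general p P
end
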